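/- Any group G which is finitely generated and satisfies g³ = 1 for every g ∈ G is finite (restricted Burnside / Burnside theorem for exponent 3). -/

import Mathlib

/-!
If every element has order dividing 3, then `x b x = b⁻¹ x⁻¹ b⁻¹` for all `x` and `b`.
With this relation, for a subgroup `H` and an element `x`, the words `a`, `a x b`, `a x⁻¹ b` and
`a x b x⁻¹ c` with `a, b, c ∈ H` form a set stable under right multiplication by `H` and by `x`,
so they exhaust the subgroup generated by `H` and `x`. Hence adjoining one element to a finite
subgroup leaves it finite, and induction over a finite generating set gives the theorem.
-/

section

variable {G : Type*} [Group G]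

theorem mul_mul_eq_inv_mul_inv_mul_inv {a b : G} (h : (a * b) ^ 3 = 1) :
    a * b * a = b⁻¹ * a⁻¹ * b⁻¹ := by
  rw [← mul_inv_rev, ← mul_inv_rev, eq_inv_iff_mul_eq_one, ← h, pow_three]
  group

theorem inv_eq_mul_self_of_pow_three {a : G} (h : a ^ 3 = 1) : a⁻¹ = a * a := by
  rw [inv_eq_iff_mul_eq_one, ← h, pow_three]

namespace Subgroup

def adjoinWord (H : Subgroup G) (x : G) : Fin 4 × H × H × H → G
  | (0, a, _, _) => a
  | (1, a, b, _) => a * x * b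
  | (2, a, b, _) => a * x⁻¹ * b
  | (3, a, b, c) => a * x * b * x⁻¹ * c

variable {H : Subgroup G} {x : G}

theorem adjoinWord_mul_mem_range (w : Fin 4 × H × H × H) (h : H) :
    H.adjoinWord x w * h ∈ Set.range (H.adjoinWord x) := by
  match w with
  | (0, a, b, c) => exact ⟨(0, a * h, b, c), by simp [adjoinWord]⟩
  | (1, a, b, c) => exact ⟨(1, a, b * h, c), by simp [adjoinWord, mul_assoc]⟩
  | (2, a, b, c) => exact ⟨(2, a, b * h, c), by simp [adjoinWord, mul_assoc]⟩
  | (3, a, b, c) => exact ⟨(3, a, b, c * h), by simp [adjoinWord, mul_assoc]⟩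

theorem adjoinWord_mul_self_mem_range (h3 : ∀ g : G, g ^ 3 = 1) (w : Fin 4 × H × H × H) :
    H.adjoinWord x w * x ∈ Set.range (H.adjoinWord x) := by
  have hxbx (b : G) : x * b * x = b⁻¹ * x⁻¹ * b⁻¹ := mul_mul_eq_inv_mul_inv_mul_inv (h3 _)
  have hxbx' (b : G) : x⁻¹ * b * x⁻¹ = b⁻¹ * x * b⁻¹ := by
    simpa using mul_mul_eq_inv_mul_inv_mul_inv (h3 (x⁻¹ * b))
  have hconj (b : G) : x⁻¹ * b * x = b⁻¹ * x * b⁻¹ * x⁻¹ := by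
    rw [← hxbx', mul_assoc _ x⁻¹, ← inv_eq_mul_self_of_pow_three (h3 x⁻¹), inv_inv]
  match w with
  | (0, a, _, _) => exact ⟨(1, a, 1, 1), by simp [adjoinWord]⟩
  | (1, a, b, _) =>
    refine ⟨(2, a * b⁻¹, b⁻¹, 1), ?_⟩
    push_cast [adjoinWord]
    calc _ = a * (x * b * x) := by rw [hxbx]; group
      _ = a * x * b * x := by group
  | (2, a, b, _) =>
    refine ⟨(3, a * b⁻¹, b⁻¹, 1), ?_⟩
    push_cast [adjoinWord]
    calc _ = a * (x⁻¹ * b * x) := by rw [hconj]; group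
      _ = a * x⁻¹ * b * x := by group
  | (3, a, b, c) =>
    refine ⟨(1, a * c * b⁻¹ * (c * b * c⁻¹), c * b * c⁻¹, 1), ?_⟩
    push_cast [adjoinWord]
    calc _ = a * c * (b : G)⁻¹ * (x⁻¹ * (c * (b : G)⁻¹ * (c : G)⁻¹) * x⁻¹) := by
          rw [hxbx']; group
      _ = a * (x * (b * (c : G)⁻¹) * x) * (c : G)⁻¹ * x⁻¹ := by rw [hxbx]; group
      _ = a * x * b * (x⁻¹ * c * x) := by rw [hconj]; group
      _ = a * x * b * x⁻¹ * c * x := by group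

theorem closure_insert_subset_range_adjoinWord (h3 : ∀ g : G, g ^ 3 = 1) :
    (closure (insert x (H : Set G)) : Set G) ⊆ Set.range (H.adjoinWord x) := by
  have range_mul_x : ∀ g ∈ Set.range (H.adjoinWord x), g * x ∈ Set.range (H.adjoinWord x) := by
    rintro _ ⟨w, rfl⟩
    exact adjoinWord_mul_self_mem_range h3 w
  intro g hg
  induction hg using closure_induction_right with
  | one => exact ⟨(0, 1, 1, 1), rfl⟩
  | mul_right g _ y hy ih =>
    obtain rfl | hy := hy
    · exact range_mul_x _ ih
    · obtain ⟨w, rfl⟩ := ih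
      exact adjoinWord_mul_mem_range w ⟨y, hy⟩
  | mul_inv_cancel g _ y hy ih =>
    obtain rfl | hy := hy
    · rw [inv_eq_mul_self_of_pow_three (h3 y), ← mul_assoc]
      exact range_mul_x _ (range_mul_x _ ih)
    · obtain ⟨w, rfl⟩ := ih
      exact adjoinWord_mul_mem_range w ⟨y, hy⟩⁻¹

theorem finite_closure_insert_of_pow_three (h3 : ∀ g : G, g ^ 3 = 1) [Finite H] :
    Finite (closure (insert x (H : Set G))) :=
  ((Set.finite_range _).subset (closure_insert_subset_range_adjoinWord h3)).to_subtype

theorem finite_closure_of_pow_three (h3 : ∀ g : G, g ^ 3 = 1) {s : Set G} (hs : s.Finite) :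
    Finite (closure s) := by
  induction s, hs using Set.Finite.induction_on with
  | empty => rw [closure_empty]; infer_instance
  | @insert x s _ _ ih =>
    have := finite_closure_insert_of_pow_three (x := x) (H := closure s) h3
    exact Finite.of_injective _ (inclusion_injective
      (closure_mono (Set.insert_subset_insert subset_closure)))

end Subgroup

end

/-- Burnside, exponent 3: any finitely generated group in which
every element satisfies `g^3 = 1` is finite. -/
theorem stmt5 (G : Type*) [Group G] (hfg : Group.FG G)
    (h3 : ∀ g : G, g ^ 3 = 1) : Finite G := by
  obtain ⟨s, hs⟩ := hfg.out
  have := Subgroup.finite_closure_of_pow_three h3 s.finite_toSet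
  rw [hs] at this
  exact Finite.of_equiv _ Subgroup.topEquiv.toEquiv
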